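/- Lemma A.6: In any disclosure game, let A ⊆ E be nonempty with finitely many minimal elements. Then the minimization problem min_L ξ(L), over all lower contour sets L in A, admits a minimizer, and it has a largest minimizer (a minimizer containing every other minimizer). -/

import Mathlib

open scoped BigOperators

universe u

/-- A disclosure game: a countable evidence space `E` with a disclosure rule
(a preorder `r`, where `r m e` means message `m` is feasible for endowment `e`)
satisfying the lower-bound condition (A4′), a prior `π0 ∈ (0,1)`, evidence
distributions `FG`, `FB` in each state, and a strictly increasing receiver
response `φ` on `[0,1]`. -/
structure DGame (E : Type u) where
  r : E → E → Prop
  r_refl : ∀ e, r e e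
  r_trans : ∀ {a b c : E}, r a b → r b c → r a c
  a4 : ∀ f : ℕ → E, (∀ n, r (f (n + 1)) (f n)) → ∃ N, ∀ n ≥ N, r (f N) (f n)
  π0 : ℝ
  π0_pos : 0 < π0
  π0_lt_one : π0 < 1
  FG : E → ℝ
  FB : E → ℝ
  FG_nonneg : ∀ e, 0 ≤ FG e
  FB_nonneg : ∀ e, 0 ≤ FB e
  FG_hasSum : HasSum FG 1
  FB_hasSum : HasSum FB 1
  FGB_pos : ∀ e, 0 < FG e + FB e
  φ : ℝ → ℝ
  φ_mono : StrictMonoOn φ (Set.Icc (0 : ℝ) 1)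

namespace DGame

variable {E : Type u} (G : DGame E)

/-- The posterior belief `ν(A)` that the state is good conditional on the
evidence lying in `A`. -/
noncomputable def nu (A : Set E) : ℝ :=
  ((∑' e : A, G.FG e) * G.π0) /
    ((∑' e : A, G.FG e) * G.π0 + (∑' e : A, G.FB e) * (1 - G.π0))

/-- `ξ(A) = φ(ν(A))`. -/
noncomputable def xi (A : Set E) : ℝ := G.φ (G.nu A)

/-- `L` is a (nonempty) lower contour set in `A`. -/
def IsLCS (A L : Set E) : Prop :=
  L.Nonempty ∧ L ⊆ A ∧ ∀ e ∈ L, ∀ e' ∈ A, G.r e' e → e' ∈ L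

/-- The Theorem-1 conditions on a candidate value function `V`. -/
def Thm1Conds (V : E → ℝ) : Prop :=
  (∀ e e', G.r e e' → V e ≤ V e') ∧
  (∀ x ∈ Set.range V, G.xi (V ⁻¹' {x}) = x) ∧
  (∀ x ∈ Set.range V, ∀ L : Set E, G.IsLCS (V ⁻¹' {x}) L → x ≤ G.xi L)

/-- A truth-leaning equilibrium `(σ, act, μ)` of the disclosure game. -/
structure Eqm where
  σ : E → E → ℝ
  act : E → ℝ
  μ : E → ℝ
  σ_nonneg : ∀ e m, 0 ≤ σ e m
  σ_hasSum : ∀ e, HasSum (σ e) 1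
  feasible : ∀ e m, 0 < σ e m → G.r m e
  μ_mem : ∀ m, μ m ∈ Set.Icc (0 : ℝ) 1
  sender_opt : ∀ e m, 0 < σ e m → ∀ m', G.r m' e → act m' ≤ act m
  receiver_opt : ∀ m, act m = G.φ (μ m)
  bayes : ∀ m, (∃ e, 0 < σ e m) →
    μ m = (∑' e : {e : E // G.r m e}, σ e.1 m * G.FG e.1 * G.π0) /
      (∑' e : {e : E // G.r m e}, σ e.1 m * (G.FG e.1 * G.π0 + G.FB e.1 * (1 - G.π0)))
  truth_leaning : ∀ e, (∀ m, G.r m e → act m ≤ act e) → σ e e = 1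
  offpath : ∀ m, (¬ ∃ e, 0 < σ e m) → μ m = G.nu {m}

/-- `V` is the sender's value function of the equilibrium `Q`. -/
def IsValueFn (Q : G.Eqm) (V : E → ℝ) : Prop :=
  ∀ e m, 0 < Q.σ e m → V e = Q.act m

end DGame

/-- The set of minimal elements of `A`. -/
def MinimalsIn {E : Type u} (r : E → E → Prop) (A : Set E) : Set E :=
  {e | e ∈ A ∧ ∀ e' ∈ A, r e' e → r e e'}

/-!
Since `φ` is strictly increasing and `ν` takes values in `[0, 1]`, minimizing `ξ` amounts to
minimizing `ν`. Code a set by its indicator in the compact space `E → Bool`. By (A4′) every element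
of `A` lies above a minimal one, so the lower contour sets in `A` are the lower-closed subsets of
`A` meeting the finite set of minimal elements; their codes form a closed, hence compact, set on
which `ν` is continuous, and a minimizer exists. If `m` is the minimal value, the excess `N - m * D`
(numerator and denominator of `ν`) is additive, vanishes exactly on minimizers and is nonnegative on
lower contour sets, so by inclusion–exclusion the union of two minimizers is a minimizer. The codes
of minimizers thus form a closed directed set, which contains its supremum.
-/

open Filter Topology

instance Bool.instOrderTopology : OrderTopology Bool :=
  letI : LocallyFiniteOrder Bool := Fintype.toLocallyFiniteOrder
  OrderTopology.of_linearLocallyFinite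

theorem IsLUB.mem_of_isClosed_of_directedOn {α : Type*} [Preorder α] [TopologicalSpace α]
    [SupConvergenceClass α] {s : Set α} {a : α} (ha : IsLUB s a) (hne : s.Nonempty)
    (hd : DirectedOn (· ≤ ·) s) (hc : IsClosed s) : a ∈ s := by
  have : Nonempty s := hne.to_subtype
  have : IsDirectedOrder s := ⟨fun x y => by
    obtain ⟨z, hz, hxz, hyz⟩ := hd x x.2 y y.2
    exact ⟨⟨z, hz⟩, hxz, hyz⟩⟩
  exact hc.mem_of_tendsto (SupConvergenceClass.tendsto_coe_atTop_isLUB a s ha)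
    (Eventually.of_forall Subtype.property)

section BoolCodes

variable {E : Type*}

theorem isClopen_setOf_apply_eq_true (e : E) : IsClopen {f : E → Bool | f e = true} :=
  (isClopen_discrete {true}).preimage (continuous_apply e)

@[simp]
theorem setOf_decide_mem_eq_true (L : Set E) [DecidablePred (· ∈ L)] :
    {e | decide (e ∈ L) = true} = L := by
  ext; simp

theorem setOf_sup_apply_eq_true (f g : E → Bool) :
    {e | (f ⊔ g) e = true} = {e | f e = true} ∪ {e | g e = true} := by
  ext; simp

theorem continuous_tsum_setOf_apply_eq_true {F : E → ℝ} (hF : Summable F) :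
    Continuous fun f : E → Bool => ∑' e : {e | f e = true}, F e := by
  simp only [tsum_subtype]
  refine continuous_tsum (fun e => ?_) (summable_abs_iff.mpr hF)
    (fun e f => (norm_indicator_le_norm_self _ _).trans_eq (Real.norm_eq_abs _))
  simp only [Set.indicator_apply, Set.mem_ofPred_eq]
  exact (continuous_of_discreteTopology (f := fun b : Bool => if b = true then F e else 0)).comp
    (continuous_apply e)

theorem tsum_union_add_tsum_inter {F : E → ℝ} (hF : Summable F) (s t : Set E) :
    ∑' e : ↑(s ∪ t), F e + ∑' e : ↑(s ∩ t), F e = ∑' e : s, F e + ∑' e : t, F e := by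
  simp only [tsum_subtype]
  rw [← (hF.indicator _).tsum_add (hF.indicator _), ← (hF.indicator _).tsum_add (hF.indicator _)]
  exact tsum_congr (Set.indicator_union_add_inter_apply F s t)

end BoolCodes

namespace DGame

variable {E : Type u} (G : DGame E) {A : Set E}

theorem wellFounded_strict : WellFounded fun a b => G.r a b ∧ ¬ G.r b a := by
  refine wellFounded_iff_isEmpty_descending_chain.mpr ⟨fun ⟨f, hf⟩ => ?_⟩
  obtain ⟨N, hN⟩ := G.a4 f fun n => (hf n).1
  exact (hf N).2 (hN (N + 1) N.le_succ)

theorem exists_mem_minimalsIn_r {e : E} (he : e ∈ A) : ∃ w ∈ MinimalsIn G.r A, G.r w e := by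
  obtain ⟨w, ⟨hwA, hwe⟩, hmin⟩ :=
    G.wellFounded_strict.has_min {w | w ∈ A ∧ G.r w e} ⟨e, he, G.r_refl e⟩
  refine ⟨w, ⟨hwA, fun w' hw'A hw'w => ?_⟩, hwe⟩
  by_contra hww'
  exact hmin w' ⟨hw'A, G.r_trans hw'w hwe⟩ ⟨hw'w, hww'⟩

variable {G}

theorem IsLCS.union {L₁ L₂ : Set E} (h₁ : G.IsLCS A L₁) (h₂ : G.IsLCS A L₂) :
    G.IsLCS A (L₁ ∪ L₂) :=
  ⟨h₁.1.mono Set.subset_union_left, Set.union_subset h₁.2.1 h₂.2.1,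
    fun e he e' he' hr =>
      he.imp (fun he => h₁.2.2 e he e' he' hr) (fun he => h₂.2.2 e he e' he' hr)⟩

theorem IsLCS.inter {L₁ L₂ : Set E} (h₁ : G.IsLCS A L₁) (h₂ : G.IsLCS A L₂)
    (hne : (L₁ ∩ L₂).Nonempty) : G.IsLCS A (L₁ ∩ L₂) :=
  ⟨hne, fun _ he => h₁.2.1 he.1,
    fun e he e' he' hr => ⟨h₁.2.2 e he.1 e' he' hr, h₂.2.2 e he.2 e' he' hr⟩⟩

variable (G)

theorem isLCS_iff_exists_mem_minimalsIn {L : Set E} :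
    G.IsLCS A L ↔ L ⊆ A ∧ (∀ e ∈ L, ∀ e' ∈ A, G.r e' e → e' ∈ L) ∧
      ∃ w ∈ MinimalsIn G.r A, w ∈ L := by
  refine ⟨fun ⟨⟨e, he⟩, hLA, hlow⟩ => ⟨hLA, hlow, ?_⟩,
    fun ⟨hLA, hlow, w, _, hw⟩ => ⟨⟨w, hw⟩, hLA, hlow⟩⟩
  obtain ⟨w, hw, hwe⟩ := G.exists_mem_minimalsIn_r (hLA he)
  exact ⟨w, hw, hlow e he w hw.1 hwe⟩

theorem isClosed_setOf_isLCS (h : (MinimalsIn G.r A).Finite) :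
    IsClosed {f : E → Bool | G.IsLCS A {e | f e = true}} := by
  simp only [isLCS_iff_exists_mem_minimalsIn, Set.ofPred_and, Set.subset_def, Set.mem_ofPred_eq]
  refine .inter ?_ (.inter ?_ ?_)
  · simp only [Set.ofPred_forall]
    exact isClosed_iInter fun e =>
      isClosed_imp (isClopen_setOf_apply_eq_true e).isOpen isClosed_const
  · simp only [Set.ofPred_forall]
    refine isClosed_iInter fun e => isClosed_imp (isClopen_setOf_apply_eq_true e).isOpen ?_
    simp only [Set.ofPred_forall]
    exact isClosed_iInter fun e' => isClosed_iInter fun _ => isClosed_iInter fun _ =>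
      (isClopen_setOf_apply_eq_true e').isClosed
  · convert h.isClosed_biUnion fun w _ => (isClopen_setOf_apply_eq_true w).isClosed using 1
    ext; simp

noncomputable def nuNum (s : Set E) : ℝ := (∑' e : s, G.FG e) * G.π0

noncomputable def nuDen (s : Set E) : ℝ :=
  (∑' e : s, G.FG e) * G.π0 + (∑' e : s, G.FB e) * (1 - G.π0)

theorem nu_eq_div (s : Set E) : G.nu s = G.nuNum s / G.nuDen s := rfl

theorem nuNum_nonneg (s : Set E) : 0 ≤ G.nuNum s :=
  mul_nonneg (tsum_nonneg fun e => G.FG_nonneg e) G.π0_pos.le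

theorem nuNum_le_nuDen (s : Set E) : G.nuNum s ≤ G.nuDen s :=
  le_add_of_nonneg_right <|
    mul_nonneg (tsum_nonneg fun e => G.FB_nonneg e) (sub_nonneg.mpr G.π0_lt_one.le)

theorem nuDen_pos {s : Set E} (hs : s.Nonempty) : 0 < G.nuDen s := by
  obtain ⟨e, he⟩ := hs
  have hG : G.FG e ≤ ∑' e : s, G.FG e :=
    (G.FG_hasSum.summable.subtype s).le_tsum ⟨e, he⟩ fun _ _ => G.FG_nonneg _
  have hB : G.FB e ≤ ∑' e : s, G.FB e :=
    (G.FB_hasSum.summable.subtype s).le_tsum ⟨e, he⟩ fun _ _ => G.FB_nonneg _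
  have hπ := G.π0_pos
  have hπ' := sub_pos.mpr G.π0_lt_one
  have he : 0 < G.FG e * G.π0 + G.FB e * (1 - G.π0) := by
    rcases (G.FG_nonneg e).eq_or_lt with hFG | hFG
    · have : 0 < G.FB e := by linarith [G.FGB_pos e]
      rw [← hFG]; positivity
    · have := G.FB_nonneg e
      positivity
  unfold nuDen
  nlinarith [mul_le_mul_of_nonneg_right hG hπ.le, mul_le_mul_of_nonneg_right hB hπ'.le]

theorem nu_mem_Icc {s : Set E} (hs : s.Nonempty) : G.nu s ∈ Set.Icc (0 : ℝ) 1 :=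
  ⟨div_nonneg (G.nuNum_nonneg s) (G.nuDen_pos hs).le,
    (div_le_one (G.nuDen_pos hs)).mpr (G.nuNum_le_nuDen s)⟩

theorem xi_le_xi_iff {s t : Set E} (hs : s.Nonempty) (ht : t.Nonempty) :
    G.xi s ≤ G.xi t ↔ G.nu s ≤ G.nu t :=
  G.φ_mono.le_iff_le (G.nu_mem_Icc hs) (G.nu_mem_Icc ht)

theorem continuous_nuNum : Continuous fun f : E → Bool => G.nuNum {e | f e = true} :=
  (continuous_tsum_setOf_apply_eq_true G.FG_hasSum.summable).mul_const _

theorem continuous_nuDen : Continuous fun f : E → Bool => G.nuDen {e | f e = true} :=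
  ((continuous_tsum_setOf_apply_eq_true G.FG_hasSum.summable).mul_const _).add
    ((continuous_tsum_setOf_apply_eq_true G.FB_hasSum.summable).mul_const _)

noncomputable def excess (m : ℝ) (s : Set E) : ℝ := G.nuNum s - m * G.nuDen s

theorem le_nu_iff_excess_nonneg {m : ℝ} {s : Set E} (hs : s.Nonempty) :
    m ≤ G.nu s ↔ 0 ≤ G.excess m s := by
  rw [nu_eq_div, le_div_iff₀ (G.nuDen_pos hs), excess, sub_nonneg]

theorem nu_eq_iff_excess_eq_zero {m : ℝ} {s : Set E} (hs : s.Nonempty) :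
    G.nu s = m ↔ G.excess m s = 0 := by
  rw [nu_eq_div, div_eq_iff (G.nuDen_pos hs).ne', excess, sub_eq_zero]

@[simp]
theorem excess_empty (m : ℝ) : G.excess m ∅ = 0 := by
  simp [excess, nuNum, nuDen]

theorem excess_union_add_excess_inter (m : ℝ) (s t : Set E) :
    G.excess m (s ∪ t) + G.excess m (s ∩ t) = G.excess m s + G.excess m t := by
  have hFG := tsum_union_add_tsum_inter G.FG_hasSum.summable s t
  have hFB := tsum_union_add_tsum_inter G.FB_hasSum.summable s t
  simp only [excess, nuNum, nuDen]
  linear_combination (G.π0 - m * G.π0) * hFG - m * (1 - G.π0) * hFB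

theorem continuous_excess (m : ℝ) :
    Continuous fun f : E → Bool => G.excess m {e | f e = true} :=
  G.continuous_nuNum.sub (continuous_const.mul G.continuous_nuDen)

theorem excess_union_eq_zero {m : ℝ} (hm : ∀ L, G.IsLCS A L → 0 ≤ G.excess m L)
    {L₁ L₂ : Set E} (h₁ : G.IsLCS A L₁) (h₂ : G.IsLCS A L₂)
    (hL₁ : G.excess m L₁ = 0) (hL₂ : G.excess m L₂ = 0) : G.excess m (L₁ ∪ L₂) = 0 := by
  have hinter : 0 ≤ G.excess m (L₁ ∩ L₂) := by
    rcases (L₁ ∩ L₂).eq_empty_or_nonempty with hempty | hne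
    · rw [hempty, excess_empty]
    · exact hm _ (h₁.inter h₂ hne)
  have := G.excess_union_add_excess_inter m L₁ L₂
  linarith [hm _ (h₁.union h₂)]

theorem exists_isLCS_forall_nu_le (hA : A.Nonempty) (h : (MinimalsIn G.r A).Finite) :
    ∃ L, G.IsLCS A L ∧ ∀ L', G.IsLCS A L' → G.nu L ≤ G.nu L' := by
  classical
  set K := {f : E → Bool | G.IsLCS A {e | f e = true}}
  obtain ⟨e, he⟩ := hA
  have hK : (fun e' => decide (e' ∈ {e' ∈ A | G.r e' e})) ∈ K := by
    simpa [K] using (show G.IsLCS A {e' ∈ A | G.r e' e} from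
      ⟨⟨e, he, G.r_refl e⟩, fun _ h => h.1, fun _ h e' he' hr => ⟨he', G.r_trans hr h.2⟩⟩)
  have hcont : ContinuousOn (fun f : E → Bool => G.nu {e | f e = true}) K :=
    G.continuous_nuNum.continuousOn.div G.continuous_nuDen.continuousOn
      fun f hf => (G.nuDen_pos hf.1).ne'
  obtain ⟨f, hf, hmin⟩ := (G.isClosed_setOf_isLCS h).isCompact.exists_isMinOn ⟨_, hK⟩ hcont
  refine ⟨_, hf, fun L' hL' => ?_⟩
  simpa using hmin (a := fun e => decide (e ∈ L')) (by simpa [K] using hL')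

theorem exists_isLCS_nu_eq_forall_subset (h : (MinimalsIn G.r A).Finite) {L₀ : Set E}
    (hL₀ : G.IsLCS A L₀) (hL₀min : ∀ L, G.IsLCS A L → G.nu L₀ ≤ G.nu L) :
    ∃ L, G.IsLCS A L ∧ G.nu L = G.nu L₀ ∧ ∀ L', G.IsLCS A L' → G.nu L' = G.nu L₀ → L' ⊆ L := by
  classical
  set m := G.nu L₀
  set M := {f : E → Bool | G.IsLCS A {e | f e = true} ∧ G.excess m {e | f e = true} = 0}
  have mem_M {L'} (hL' : G.IsLCS A L') (hL'm : G.nu L' = m) :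
      (fun e => decide (e ∈ L')) ∈ M := by
    simpa [M, hL'] using (G.nu_eq_iff_excess_eq_zero hL'.1).mp hL'm
  have hMc : IsClosed M :=
    (G.isClosed_setOf_isLCS h).inter (isClosed_eq (G.continuous_excess m) continuous_const)
  have hMsup : SupClosed M := fun f hf g hg => by
    simp only [M, Set.mem_ofPred_eq, setOf_sup_apply_eq_true]
    exact ⟨hf.1.union hg.1, G.excess_union_eq_zero
      (fun L hL => (G.le_nu_iff_excess_nonneg hL.1).mp (hL₀min L hL)) hf.1 hg.1 hf.2 hg.2⟩
  obtain ⟨hsupLCS, hsup⟩ :=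
    (isLUB_sSup M).mem_of_isClosed_of_directedOn ⟨_, mem_M hL₀ rfl⟩ hMsup.directedOn hMc
  refine ⟨_, hsupLCS, (G.nu_eq_iff_excess_eq_zero hsupLCS.1).mpr hsup,
    fun L' hL' hL'm e he => ?_⟩
  exact top_le_iff.mp (by simpa [he] using le_sSup (mem_M hL' hL'm) e)

end DGame

theorem stmt_9_general {E : Type u} (G : DGame E) (A : Set E) (hA : A.Nonempty)
    (h : (MinimalsIn G.r A).Finite) :
    ∃ Lstar : Set E, G.IsLCS A Lstar ∧ (∀ L' : Set E, G.IsLCS A L' → G.xi Lstar ≤ G.xi L') ∧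
      ∀ L' : Set E, G.IsLCS A L' → (∀ L'' : Set E, G.IsLCS A L'' → G.xi L' ≤ G.xi L'') →
        L' ⊆ Lstar := by
  obtain ⟨L₀, hL₀, hL₀min⟩ := G.exists_isLCS_forall_nu_le hA h
  obtain ⟨L, hL, hLm, hLmax⟩ := G.exists_isLCS_nu_eq_forall_subset h hL₀ hL₀min
  refine ⟨L, hL, fun L' hL' => (G.xi_le_xi_iff hL.1 hL'.1).mpr (hLm ▸ hL₀min L' hL'),
    fun L' hL' hL'min => hLmax L' hL' (le_antisymm ?_ (hL₀min L' hL'))⟩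
  exact hLm ▸ (G.xi_le_xi_iff hL'.1 hL.1).mp (hL'min L hL)

/-- Lemma A.6: if a nonempty `A ⊆ E` has finitely many minimal elements, the
problem of minimizing `ξ` over lower contour sets in `A` admits a minimizer,
and it has a largest minimizer. -/
theorem stmt_9 {E : Type u} [Countable E] (G : DGame E) (A : Set E) (hA : A.Nonempty)
    (h : (MinimalsIn G.r A).Finite) :
    ∃ Lstar : Set E, G.IsLCS A Lstar ∧ (∀ L' : Set E, G.IsLCS A L' → G.xi Lstar ≤ G.xi L') ∧
      ∀ L' : Set E, G.IsLCS A L' → (∀ L'' : Set E, G.IsLCS A L'' → G.xi L' ≤ G.xi L'') →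
        L' ⊆ Lstar :=
  stmt_9_general G A hA h
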